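/- arXiv:2307.10242 — 2 statements merged into one kernel-verified Lean document; each statement's English description precedes it below -/
import Mathlib

section
/- Linear homotopy perturbation lemma: Let (L, δ) be a cochain complex with a contraction η (η² = 0, ηδη = η), let H = ker(δη) ∩ ker(ηδ) with inclusion ι : H → L and projection π = 1 − δη − ηδ : L → H, and let λ : L → L be a degree +1 map such that (δ + λ)² = 0 and ηλ is nilpotent. Set μ = πλ(1+ηλ)⁻¹ι, φ = (1+ηλ)⁻¹ι, π̃ = π(1+λη)⁻¹, and η̃ = η(1+λη)⁻¹. Then: (a) (δ + μ)² = 0 on H; (b) φ is a chain map from (H, δ+μ) to (L, δ+λ) and π̃ is a chain map from (L, δ+λ) to (H, δ+μ); (c) π̃φ = id_H; (d) φπ̃ = id_L − (δ+λ)η̃ − η̃(δ+λ). -/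
/-!
Everything reduces to identities in the ring `End L`. Write `A = (1 + ηλ)⁻¹`, `B = (1 + λη)⁻¹` and
`p = 1 - δη - ηδ`. The push-through relations `λA = Bλ`, `ηB = Aη` and the consequence
`δλ = -λ(δ + λ)` of `δ² = 0 = (δ + λ)²` turn (b), (c), (d) into ring computations, which descend
to `H` because `ιπ = p` and `pι = ι`. Then (a) is formal: `φ` has the left inverse `π̃` and
intertwines `δ + μ` with the square-zero `δ + λ`.
-/

open scoped Ring

theorem IsNilpotent.mul_comm {R : Type*} [MonoidWithZero R] {a b : R} (h : IsNilpotent (a * b)) :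
    IsNilpotent (b * a) := by
  obtain ⟨n, hn⟩ := h
  refine ⟨n + 1, ?_⟩
  rw [_root_.pow_succ, ← mul_assoc, mul_pow_mul, hn, mul_zero, zero_mul]

namespace Ring

variable {R : Type*} [Ring R]

theorem mul_inverse_one_add {x : R} (h : IsUnit (1 + x)) : x * (1 + x)⁻¹ʳ = 1 - (1 + x)⁻¹ʳ := by
  rw [eq_sub_iff_add_eq, ← add_one_mul, add_comm x 1, Ring.mul_inverse_cancel _ h]

theorem inverse_one_add_mul {x : R} (h : IsUnit (1 + x)) : (1 + x)⁻¹ʳ * x = 1 - (1 + x)⁻¹ʳ := by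
  rw [eq_sub_iff_add_eq, ← mul_add_one, add_comm x 1, Ring.inverse_mul_cancel _ h]

theorem mul_inverse_one_add_mul_comm {a b : R} (hab : IsUnit (1 + a * b))
    (hba : IsUnit (1 + b * a)) :
    b * (1 + a * b)⁻¹ʳ = (1 + b * a)⁻¹ʳ * b := by
  have : b * (1 + a * b) = (1 + b * a) * b := by noncomm_ring
  calc b * (1 + a * b)⁻¹ʳ = (1 + b * a)⁻¹ʳ * ((1 + b * a) * b) * (1 + a * b)⁻¹ʳ := by
        rw [← mul_assoc, Ring.inverse_mul_cancel _ hba, one_mul]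
    _ = (1 + b * a)⁻¹ʳ * b := by
        rw [← this, mul_assoc, mul_assoc, Ring.mul_inverse_cancel _ hab, mul_one]

theorem inverse_one_add_mul_mul_of_mul_self_eq_zero {a b : R} (ha : a * a = 0)
    (h : IsUnit (1 + b * a)) :
    (1 + b * a)⁻¹ʳ * a = a := by
  conv_rhs => rw [← one_mul a, ← Ring.inverse_mul_cancel _ h, mul_assoc]
  rw [add_mul, one_mul, mul_assoc, ha, mul_zero, add_zero]

end Ring

theorem LinearMap.mul_self_eq_zero_of_retract {K M N : Type*} [Semiring K]
    [AddCommMonoid M] [AddCommMonoid N] [Module K M] [Module K N]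
    {f : M →ₗ[K] N} {g : N →ₗ[K] M} {D : Module.End K M} {D' : Module.End K N}
    (hf : f ∘ₗ D = D' ∘ₗ f) (hgf : g ∘ₗ f = LinearMap.id) (hD' : D' * D' = 0) : D * D = 0 := by
  calc D * D = (g ∘ₗ f) ∘ₗ D ∘ₗ D := by rw [hgf]; rfl
    _ = g ∘ₗ (D' ∘ₗ f) ∘ₗ D := by rw [← hf]; rfl
    _ = g ∘ₗ (D' * D') ∘ₗ f := by rw [LinearMap.comp_assoc, hf]; rfl
    _ = 0 := by rw [hD', LinearMap.zero_comp, LinearMap.comp_zero]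

namespace HomotopyPerturbation

variable {R : Type*} [Ring R]

def harmonicProj (δ η : R) : R := 1 - δ * η - η * δ

variable {δ η lam : R}

theorem harmonicProj_mul_contraction (hη : η * η = 0) (hηδη : η * δ * η = η) :
    harmonicProj δ η * η = 0 := by
  calc harmonicProj δ η * η = η - δ * (η * η) - η * δ * η := by unfold harmonicProj; noncomm_ring
    _ = 0 := by rw [hη, hηδη]; simp

theorem contraction_mul_harmonicProj (hη : η * η = 0) (hηδη : η * δ * η = η) :
    η * harmonicProj δ η = 0 := by
  calc η * harmonicProj δ η = η - η * δ * η - η * η * δ := by unfold harmonicProj; noncomm_ring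
    _ = 0 := by rw [hη, hηδη]; simp

theorem commute_harmonicProj (hδ : δ * δ = 0) : Commute (harmonicProj δ η) δ := by
  calc harmonicProj δ η * δ = δ * harmonicProj δ η + (δ * δ) * η - η * (δ * δ) := by
        unfold harmonicProj; noncomm_ring
    _ = δ * harmonicProj δ η := by rw [hδ]; simp

theorem harmonicProj_mul_self (hδ : δ * δ = 0) (hη : η * η = 0) (hηδη : η * δ * η = η) :
    harmonicProj δ η * harmonicProj δ η = harmonicProj δ η := by
  calc harmonicProj δ η * harmonicProj δ η
      = 1 - 2 * δ * η - 2 * η * δ + δ * (η * δ * η) + η * δ * η * δ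
        + δ * (η * η) * δ + η * (δ * δ) * η := by unfold harmonicProj; noncomm_ring
    _ = harmonicProj δ η := by rw [hδ, hη, hηδη]; unfold harmonicProj; noncomm_ring

theorem mul_perturbation (hδ : δ * δ = 0) (hMC : (δ + lam) * (δ + lam) = 0) :
    δ * lam = -(lam * (δ + lam)) := by
  rw [eq_neg_iff_add_eq_zero, ← hMC, ← sub_eq_zero]
  calc δ * lam + lam * (δ + lam) - (δ + lam) * (δ + lam) = -(δ * δ) := by noncomm_ring
    _ = 0 := by rw [hδ, neg_zero]

theorem perturbation_mul (hδ : δ * δ = 0) (hMC : (δ + lam) * (δ + lam) = 0) :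
    lam * δ = -((δ + lam) * lam) := by
  rw [eq_neg_iff_add_eq_zero, ← hMC, ← sub_eq_zero]
  calc lam * δ + (δ + lam) * lam - (δ + lam) * (δ + lam) = -(δ * δ) := by noncomm_ring
    _ = 0 := by rw [hδ, neg_zero]

theorem perturbed_incl_chainMap (hδ : δ * δ = 0) (hMC : (δ + lam) * (δ + lam) = 0)
    (hu : IsUnit (1 + η * lam)) :
    (1 + η * lam)⁻¹ʳ * (δ + harmonicProj δ η * lam * (1 + η * lam)⁻¹ʳ)
      = (δ + lam) * (1 + η * lam)⁻¹ʳ := by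
  set A := (1 + η * lam)⁻¹ʳ
  calc A * (δ + harmonicProj δ η * lam * A)
      = A * δ + A * lam * A - A * δ * (η * lam * A) - A * η * (δ * lam) * A := by
        unfold harmonicProj; noncomm_ring
    _ = A * δ + A * lam * A - A * δ * (1 - A) + A * (η * lam) * (δ + lam) * A := by
        rw [Ring.mul_inverse_one_add hu, mul_perturbation hδ hMC]; noncomm_ring
    _ = A * δ + A * lam * A - A * δ * (1 - A) + (1 - A) * (δ + lam) * A := by
        rw [Ring.inverse_one_add_mul hu]
    _ = (δ + lam) * A := by noncomm_ring

theorem perturbed_proj_chainMap (hδ : δ * δ = 0) (hMC : (δ + lam) * (δ + lam) = 0)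
    (hu : IsUnit (1 + η * lam)) (hu' : IsUnit (1 + lam * η)) :
    (δ + harmonicProj δ η * lam * (1 + η * lam)⁻¹ʳ) * (harmonicProj δ η * (1 + lam * η)⁻¹ʳ)
      = harmonicProj δ η * (1 + lam * η)⁻¹ʳ * (δ + lam) := by
  set B := (1 + lam * η)⁻¹ʳ
  set p := harmonicProj δ η with hp
  have key : B * lam * p * B = B * (δ + lam) - δ * B := by
    calc B * lam * p * B = B * lam * B - B * (lam * δ) * (η * B) - B * (lam * η) * δ * B := by
          rw [hp]; unfold harmonicProj; noncomm_ring
      _ = B * lam * B + B * (δ + lam) * (lam * η * B) - (1 - B) * δ * B := by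
          rw [perturbation_mul hδ hMC, Ring.inverse_one_add_mul hu']; noncomm_ring
      _ = B * lam * B + B * (δ + lam) * (1 - B) - (1 - B) * δ * B := by
          rw [Ring.mul_inverse_one_add hu']
      _ = B * (δ + lam) - δ * B := by noncomm_ring
  calc (δ + p * lam * (1 + η * lam)⁻¹ʳ) * (p * B)
      = δ * p * B + p * (lam * (1 + η * lam)⁻¹ʳ) * p * B := by noncomm_ring
    _ = p * δ * B + p * (B * lam * p * B) := by
        rw [Ring.mul_inverse_one_add_mul_comm hu hu', (commute_harmonicProj hδ).eq]; noncomm_ring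
    _ = p * B * (δ + lam) := by rw [key]; noncomm_ring

theorem perturbed_proj_mul_incl (hδ : δ * δ = 0) (hη : η * η = 0) (hηδη : η * δ * η = η)
    (hu : IsUnit (1 + η * lam)) (hu' : IsUnit (1 + lam * η)) :
    harmonicProj δ η * (1 + lam * η)⁻¹ʳ * (1 + η * lam)⁻¹ʳ * harmonicProj δ η
      = harmonicProj δ η := by
  set A := (1 + η * lam)⁻¹ʳ
  set B := (1 + lam * η)⁻¹ʳ
  set p := harmonicProj δ η
  have hBp : B * p = p := by
    calc B * p = (1 - B * (lam * η)) * p := by rw [Ring.inverse_one_add_mul hu']; noncomm_ring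
      _ = p - B * lam * (η * p) := by noncomm_ring
      _ = p := by rw [contraction_mul_harmonicProj hη hηδη]; noncomm_ring
  calc p * B * A * p = p * B * (1 - η * lam * A) * p := by
        rw [Ring.mul_inverse_one_add hu]; noncomm_ring
    _ = p * (B * p) - p * (B * η) * lam * A * p := by noncomm_ring
    _ = p := by
        rw [hBp, Ring.inverse_one_add_mul_mul_of_mul_self_eq_zero hη hu',
          harmonicProj_mul_contraction hη hηδη, harmonicProj_mul_self hδ hη hηδη]
        noncomm_ring

theorem perturbed_incl_mul_proj (hδ : δ * δ = 0) (hMC : (δ + lam) * (δ + lam) = 0)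
    (hu : IsUnit (1 + η * lam)) (hu' : IsUnit (1 + lam * η)) :
    (1 + η * lam)⁻¹ʳ * harmonicProj δ η * (1 + lam * η)⁻¹ʳ
      = 1 - (δ + lam) * (η * (1 + lam * η)⁻¹ʳ) - η * (1 + lam * η)⁻¹ʳ * (δ + lam) := by
  have hMC' : lam * (δ + lam) + (δ + lam) * lam = lam * lam := by
    rw [mul_add lam, perturbation_mul hδ hMC]; noncomm_ring
  set A := (1 + η * lam)⁻¹ʳ
  set B := (1 + lam * η)⁻¹ʳ
  set δ' := δ + lam with hδ'
  have hηB : η * B = A * η := Ring.mul_inverse_one_add_mul_comm hu' hu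
  set t := η * B
  have hA : 1 - A = t * lam := by rw [hηB, mul_assoc, Ring.inverse_one_add_mul hu]
  have hB : 1 - B = lam * t := by rw [← mul_assoc, Ring.mul_inverse_one_add hu']
  calc A * harmonicProj δ η * B
      = A * (1 + η * lam) * B + A * (lam * η * B) - A * δ' * t - A * η * δ' * B := by
        unfold harmonicProj; rw [hδ']; noncomm_ring
    _ = B + A * (1 - B) - A * δ' * t - t * δ' * B := by
        rw [Ring.inverse_mul_cancel _ hu, Ring.mul_inverse_one_add hu', ← hηB]; noncomm_ring
    _ = 1 - δ' * t - t * δ' - (1 - A) * (1 - B) + (1 - A) * δ' * t + t * δ' * (1 - B) := by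
        noncomm_ring
    _ = 1 - δ' * t - t * δ' + t * (lam * δ' + δ' * lam - lam * lam) * t := by
        rw [hA, hB]; noncomm_ring
    _ = 1 - δ' * t - t * δ' := by rw [hMC', sub_self, mul_zero, zero_mul, add_zero]

theorem harmonicProj_comp_subtype {K L : Type*} [Ring K] [AddCommGroup L] [Module K L]
    {δ η : Module.End K L} {H : Submodule K L}
    (hH : H ≤ LinearMap.ker (δ * η) ⊓ LinearMap.ker (η * δ)) :
    harmonicProj δ η ∘ₗ H.subtype = H.subtype := by
  ext x
  obtain ⟨hδη, hηδ⟩ := Submodule.mem_inf.mp (hH x.2)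
  simp [harmonicProj, LinearMap.mem_ker.mp hδη, LinearMap.mem_ker.mp hηδ]

end HomotopyPerturbation

open HomotopyPerturbation

/-- Linear homotopy perturbation lemma: given a contraction `η` of `(L, δ)`,
`H = ker(δη) ∩ ker(ηδ)` with inclusion `ι` and projection `π` (with
`ι ∘ π = 1 − δη − ηδ`), and a perturbation `λ` of degree `+1` with
`(δ+λ)² = 0` and `ηλ` nilpotent, setting `μ = πλ(1+ηλ)⁻¹ι`, `φ = (1+ηλ)⁻¹ι`,
`π̃ = π(1+λη)⁻¹`, `η̃ = η(1+λη)⁻¹`, we have: (a) `(δ+μ)² = 0` on `H`;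
(b) `φ` and `π̃` are chain maps; (c) `π̃φ = id`; (d) `φπ̃ = 1 − (δ+λ)η̃ − η̃(δ+λ)`. -/
theorem stmt_5 {K : Type*} [Field K] {L : Type*} [AddCommGroup L] [Module K L]
    (δ η lam : Module.End K L)
    (hδ : δ * δ = 0) (hη : η * η = 0) (hηδη : η * δ * η = η)
    (hMC : (δ + lam) * (δ + lam) = 0) (hnil : IsNilpotent (η * lam))
    (H : Submodule K L)
    (hH : H = LinearMap.ker (δ * η) ⊓ LinearMap.ker (η * δ))
    (π : L →ₗ[K] H) (hπ : H.subtype ∘ₗ π = 1 - δ * η - η * δ)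
    (δH : Module.End K H) (hδH : H.subtype ∘ₗ δH = δ ∘ₗ H.subtype) :
    letI ι : H →ₗ[K] L := H.subtype
    letI φ : H →ₗ[K] L := (Ring.inverse (1 + η * lam) : Module.End K L) ∘ₗ ι
    letI μ : Module.End K H := π ∘ₗ (lam ∘ₗ φ)
    letI πt : L →ₗ[K] H := π ∘ₗ (Ring.inverse (1 + lam * η) : Module.End K L)
    letI ηt : Module.End K L := η * Ring.inverse (1 + lam * η)
    -- (a) the transferred differential squares to zero on H
    (δH + μ) * (δH + μ) = 0 ∧
    -- (b) φ and π̃ are chain maps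
    φ ∘ₗ (δH + μ) = ((δ + lam) : Module.End K L) ∘ₗ φ ∧
    (δH + μ) ∘ₗ πt = πt ∘ₗ ((δ + lam) : Module.End K L) ∧
    -- (c) π̃ ∘ φ = id on H
    πt ∘ₗ φ = LinearMap.id ∧
    -- (d) φ ∘ π̃ = 1 − (δ+λ)η̃ − η̃(δ+λ)
    (φ ∘ₗ πt : Module.End K L)
      = 1 - (δ + lam) * ηt - ηt * (δ + lam) := by
  have hu : IsUnit (1 + η * lam) := hnil.isUnit_one_add
  have hu' : IsUnit (1 + lam * η) := hnil.mul_comm.isUnit_one_add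
  set A : Module.End K L := (1 + η * lam)⁻¹ʳ
  set B : Module.End K L := (1 + lam * η)⁻¹ʳ
  set ι := H.subtype
  set μ := π ∘ₗ lam ∘ₗ A ∘ₗ ι
  have hιπ : ι ∘ₗ π = harmonicProj δ η := hπ
  have hpι : harmonicProj δ η ∘ₗ ι = ι := harmonicProj_comp_subtype hH.le
  have hιμ : ι ∘ₗ (δH + μ) = (δ + harmonicProj δ η * lam * A) ∘ₗ ι := by
    rw [LinearMap.comp_add, hδH, LinearMap.add_comp, ← LinearMap.comp_assoc, hιπ]; rfl
  have hφ : (A ∘ₗ ι) ∘ₗ (δH + μ) = (δ + lam) ∘ₗ A ∘ₗ ι := by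
    calc (A ∘ₗ ι) ∘ₗ (δH + μ) = A ∘ₗ (δ + harmonicProj δ η * lam * A) ∘ₗ ι := by
          rw [LinearMap.comp_assoc, hιμ]
      _ = ((δ + lam) * A) ∘ₗ ι := by rw [← perturbed_incl_chainMap hδ hMC hu]; rfl
  have hπt : (δH + μ) ∘ₗ π ∘ₗ B = (π ∘ₗ B) ∘ₗ (δ + lam) := by
    rw [← LinearMap.cancel_left H.injective_subtype]
    calc ι ∘ₗ (δH + μ) ∘ₗ π ∘ₗ B = (δ + harmonicProj δ η * lam * A) * ((ι ∘ₗ π) * B) := by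
          rw [← LinearMap.comp_assoc, hιμ]; rfl
      _ = (ι ∘ₗ π) * B * (δ + lam) := by rw [hιπ, perturbed_proj_chainMap hδ hMC hu hu']
  have hc : (π ∘ₗ B) ∘ₗ A ∘ₗ ι = LinearMap.id := by
    rw [← LinearMap.cancel_left H.injective_subtype]
    calc ι ∘ₗ (π ∘ₗ B) ∘ₗ A ∘ₗ ι = ((ι ∘ₗ π) * B * A) ∘ₗ ι := rfl
      _ = (harmonicProj δ η * B * A) ∘ₗ (harmonicProj δ η ∘ₗ ι) := by rw [hιπ, hpι]
      _ = ι ∘ₗ LinearMap.id := by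
          rw [← LinearMap.comp_assoc, ← Module.End.mul_eq_comp,
            perturbed_proj_mul_incl hδ hη hηδη hu hu', hpι]
          rfl
  refine ⟨LinearMap.mul_self_eq_zero_of_retract hφ hc hMC, hφ, hπt, hc, ?_⟩
  calc (A ∘ₗ ι) ∘ₗ π ∘ₗ B = A * (ι ∘ₗ π) * B := rfl
    _ = _ := by rw [hιπ, perturbed_incl_mul_proj hδ hMC hu hu']
end

section
/- Let 𝒞 be a category of fibrant objects and X an object of 𝒞. Suppose X →^{s} P_X →^{e} X × X and X →^{s'} P'_X →^{e'} X × X are two path space decompositions (s, s' weak equivalences, e, e' fibrations, with e∘s and e'∘s' equal to the diagonal). Then there exists an object P''_X together with a weak equivalence s'' : X → P''_X, trivial fibrations f₁ : P''_X → P_X and f₂ : P''_X → P'_X, and a fibration e'' : P''_X → X × X, such that f₁ ∘ s'' = s, f₂ ∘ s'' = s', e ∘ f₁ = e'' = e' ∘ f₂, and e'' ∘ s'' is the diagonal. -/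
/-!
Pull the two path objects back over `X × X`: the projections of `P ×_{X × X} P'` are fibrations,
being base changes of `e'` and `e`. Factor `(s, s') : X → P ×_{X × X} P'` as a weak equivalence
`s''` followed by a fibration; composing with the projections gives fibrations `f₁`, `f₂` with
`s'' ≫ f₁ = s` and `s'' ≫ f₂ = s'`, and these are weak equivalences by two-out-of-three.
-/

open CategoryTheory CategoryTheory.Limits

universe v u

/-- A category of fibrant objects (Brown): a category with finite products and
a final object, with distinguished classes of fibrations and weak equivalences
satisfying Brown's axioms. -/
structure CategoryOfFibrantObjects (C : Type u) [Category.{v} C]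
    [HasFiniteProducts C] where
  isFib : ∀ {X Y : C}, (X ⟶ Y) → Prop
  isWeq : ∀ {X Y : C}, (X ⟶ Y) → Prop
  /-- all isomorphisms are weak equivalences -/
  weq_of_iso : ∀ {X Y : C} (f : X ⟶ Y), IsIso f → isWeq f
  /-- two out of three -/
  weq_comp : ∀ {X Y Z : C} (f : X ⟶ Y) (g : Y ⟶ Z),
    isWeq f → isWeq g → isWeq (f ≫ g)
  weq_right_of_comp : ∀ {X Y Z : C} (f : X ⟶ Y) (g : Y ⟶ Z),
    isWeq f → isWeq (f ≫ g) → isWeq g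
  weq_left_of_comp : ∀ {X Y Z : C} (f : X ⟶ Y) (g : Y ⟶ Z),
    isWeq g → isWeq (f ≫ g) → isWeq f
  /-- all isomorphisms are fibrations, and fibrations compose -/
  fib_of_iso : ∀ {X Y : C} (f : X ⟶ Y), IsIso f → isFib f
  fib_comp : ∀ {X Y Z : C} (f : X ⟶ Y) (g : Y ⟶ Z),
    isFib f → isFib g → isFib (f ≫ g)
  /-- base changes of fibrations exist -/
  base_change_exists : ∀ {X Y Z : C} (f : X ⟶ Z) (g : Y ⟶ Z), isFib g →
    ∃ (W : C) (p : W ⟶ X) (q : W ⟶ Y), IsPullback p q f g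
  /-- base changes of fibrations are fibrations -/
  fib_base_change : ∀ {X Y Z : C} (f : X ⟶ Z) (g : Y ⟶ Z), isFib g →
    ∀ (W : C) (p : W ⟶ X) (q : W ⟶ Y), IsPullback p q f g → isFib p
  /-- base changes of trivial fibrations are trivial fibrations -/
  triv_fib_base_change : ∀ {X Y Z : C} (f : X ⟶ Z) (g : Y ⟶ Z),
    isFib g → isWeq g →
    ∀ (W : C) (p : W ⟶ X) (q : W ⟶ Y), IsPullback p q f g → isWeq p
  /-- every object is fibrant -/
  all_fibrant : ∀ X : C, isFib (terminal.from X)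
  /-- factorization: every morphism factors as a weak equivalence followed by
  a fibration -/
  factorization : ∀ {X Y : C} (f : X ⟶ Y),
    ∃ (Z : C) (w : X ⟶ Z) (p : Z ⟶ Y), isWeq w ∧ isFib p ∧ w ≫ p = f

namespace CategoryOfFibrantObjects

variable {C : Type u} [Category.{v} C] [HasFiniteProducts C] (F : CategoryOfFibrantObjects C)

theorem isWeq_of_fac {A B D : C} {w : A ⟶ B} {f : B ⟶ D} {g : A ⟶ D}
    (hw : F.isWeq w) (hg : F.isWeq g) (fac : w ≫ f = g) : F.isWeq f :=
  F.weq_right_of_comp w f hw (fac ▸ hg)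

theorem exists_weq_lift_of_isFib_cospan {A Y Y' Z : C} {f : Y ⟶ Z} {g : Y' ⟶ Z}
    (hf : F.isFib f) (hg : F.isFib g) (a : A ⟶ Y) (b : A ⟶ Y') (hab : a ≫ f = b ≫ g) :
    ∃ (V : C) (w : A ⟶ V) (p : V ⟶ Y) (q : V ⟶ Y'),
      F.isWeq w ∧ F.isFib p ∧ F.isFib q ∧ w ≫ p = a ∧ w ≫ q = b ∧ p ≫ f = q ≫ g := by
  obtain ⟨W, pW, qW, hpb⟩ := F.base_change_exists f g hg
  obtain ⟨V, w, π, hw, hπ, hwπ⟩ := F.factorization (hpb.lift a b hab)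
  refine ⟨V, w, π ≫ pW, π ≫ qW, hw, F.fib_comp _ _ hπ (F.fib_base_change f g hg W pW qW hpb),
    F.fib_comp _ _ hπ (F.fib_base_change g f hf W qW pW hpb.flip), ?_, ?_, ?_⟩
  · rw [← Category.assoc, hwπ, hpb.lift_fst]
  · rw [← Category.assoc, hwπ, hpb.lift_snd]
  · rw [Category.assoc, hpb.w, Category.assoc]

end CategoryOfFibrantObjects

/-- Any two path space decompositions of an object `X` in a category of fibrant
objects are dominated by a common third one via trivial fibrations. -/
theorem stmt_9 {C : Type u} [Category.{v} C] [HasFiniteProducts C]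
    (F : CategoryOfFibrantObjects C) (X P P' : C)
    (s : X ⟶ P) (e : P ⟶ X ⨯ X) (s' : X ⟶ P') (e' : P' ⟶ X ⨯ X)
    (hs : F.isWeq s) (he : F.isFib e)
    (hse : s ≫ e = prod.lift (𝟙 X) (𝟙 X))
    (hs' : F.isWeq s') (he' : F.isFib e')
    (hse' : s' ≫ e' = prod.lift (𝟙 X) (𝟙 X)) :
    ∃ (P'' : C) (s'' : X ⟶ P'') (f₁ : P'' ⟶ P) (f₂ : P'' ⟶ P')
      (e'' : P'' ⟶ X ⨯ X),
      F.isWeq s'' ∧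
      F.isFib f₁ ∧ F.isWeq f₁ ∧
      F.isFib f₂ ∧ F.isWeq f₂ ∧
      F.isFib e'' ∧
      s'' ≫ f₁ = s ∧ s'' ≫ f₂ = s' ∧
      f₁ ≫ e = e'' ∧ f₂ ≫ e' = e'' ∧
      s'' ≫ e'' = prod.lift (𝟙 X) (𝟙 X) := by
  obtain ⟨P'', s'', f₁, f₂, hs'', hf₁, hf₂, hs''f₁, hs''f₂, hfe⟩ :=
    F.exists_weq_lift_of_isFib_cospan he he' s s' (hse.trans hse'.symm)
  refine ⟨P'', s'', f₁, f₂, f₁ ≫ e, hs'', hf₁, F.isWeq_of_fac hs'' hs hs''f₁,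
    hf₂, F.isWeq_of_fac hs'' hs' hs''f₂, F.fib_comp _ _ hf₁ he, hs''f₁, hs''f₂, rfl,
    hfe.symm, ?_⟩
  rw [← Category.assoc, hs''f₁, hse]
end
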